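/- arXiv:2202.05671 — 3 statements merged into one kernel-verified Lean document; each statement's English description precedes it below -/
import Mathlib

section
/- Let S > 0, m > 0, and let u, d, r*, C, C^u, C^d, m^u, m^d, β_S, β_C be real numbers with u > r* > d > 0. Suppose the following four equations hold: (uS - S)/S - (r* - 1) = β_S·((m^u - m)/m - (r* - 1)); (dS - S)/S - (r* - 1) = β_S·((m^d - m)/m - (r* - 1)); (C^u - C)/C - (r* - 1) = β_C·((m^u - m)/m - (r* - 1)) (with C ≠ 0); and (C^d - C)/C - (r* - 1) = β_C·((m^d - m)/m - (r* - 1)). Then C = [((r* - d)/(u - d))·C^u + ((u - r*)/(u - d))·C^d] / r*. -/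
/-!
Write `X`, `Y` for the market's excess returns in the two states. The stock's excess returns
`u - r*` and `d - r*` have opposite signs, so `β_S ≠ 0`; since the risk-neutral weights
`r* - d` and `u - r*` annihilate these, dividing by `β_S` gives `(r* - d) X + (u - r*) Y = 0`. Any asset exposed only to
the same factor has excess returns proportional to `X` and `Y`, so the same weights annihilate
the option's excess returns `C^u / C - r*`, `C^d / C - r*`, which is the pricing formula.
-/

def excessReturn {K : Type*} [Field K] (x₀ x₁ r : K) : K := (x₁ - x₀) / x₀ - (r - 1)

theorem excessReturn_eq {K : Type*} [Field K] {x₀ : K} (x₁ r : K) (hx₀ : x₀ ≠ 0) :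
    excessReturn x₀ x₁ r = x₁ / x₀ - r := by
  unfold excessReturn
  field_simp
  ring

theorem excessReturn_mul_self {K : Type*} [Field K] {x : K} (a r : K) (hx : x ≠ 0) :
    excessReturn x (a * x) r = a - r := by
  rw [excessReturn_eq _ _ hx, mul_div_cancel_right₀ _ hx]

/-- `a`, `b` are the gross state returns of a reference asset with `a ≠ r`, and `p`, `q` those of
an asset loading on the same factor. -/
theorem riskNeutral_weights_combination {K : Type*} [Field K] {a b r p q βa β X Y : K}
    (hab : a ≠ r) (ha : a - r = βa * X) (hb : b - r = βa * Y)
    (hp : p - r = β * X) (hq : q - r = β * Y) :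
    (r - b) * p + (a - r) * q = (a - b) * r := by
  have hβa : βa ≠ 0 := by
    rintro rfl
    exact hab (sub_eq_zero.mp (by simpa using ha))
  have hXY : (r - b) * X + (a - r) * Y = 0 := by
    refine (mul_eq_zero.mp ?_).resolve_left hβa
    linear_combination -(r - b) * ha - (a - r) * hb
  linear_combination (r - b) * hp + (a - r) * hq + β * hXY

theorem stmt_4_general (S m u d rS C Cu Cd mu md βS βC : ℝ)
    (hS : 0 < S) (hC : C ≠ 0)
    (hud : u > rS) (hrd : rS > d) (hd : d > 0)
    (h1 : (u * S - S) / S - (rS - 1) = βS * ((mu - m) / m - (rS - 1)))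
    (h2 : (d * S - S) / S - (rS - 1) = βS * ((md - m) / m - (rS - 1)))
    (h3 : (Cu - C) / C - (rS - 1) = βC * ((mu - m) / m - (rS - 1)))
    (h4 : (Cd - C) / C - (rS - 1) = βC * ((md - m) / m - (rS - 1))) :
    C = (((rS - d) / (u - d)) * Cu + ((u - rS) / (u - d)) * Cd) / rS := by
  have hSu := excessReturn_mul_self u rS hS.ne'
  have hSd := excessReturn_mul_self d rS hS.ne'
  have hCu := excessReturn_eq Cu rS hC
  have hCd := excessReturn_eq Cd rS hC
  unfold excessReturn at hSu hSd hCu hCd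
  have key := riskNeutral_weights_combination hud.ne' (hSu ▸ h1) (hSd ▸ h2) (hCu ▸ h3) (hCd ▸ h4)
  have hud0 : u - d ≠ 0 := by linarith
  have hrS : rS ≠ 0 := by linarith
  field_simp at key ⊢
  linear_combination -key

theorem stmt_4 (S m u d rS C Cu Cd mu md βS βC : ℝ)
    (hS : 0 < S) (hm : 0 < m) (hC : C ≠ 0)
    (hud : u > rS) (hrd : rS > d) (hd : d > 0)
    (h1 : (u * S - S) / S - (rS - 1) = βS * ((mu - m) / m - (rS - 1)))
    (h2 : (d * S - S) / S - (rS - 1) = βS * ((md - m) / m - (rS - 1)))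
    (h3 : (Cu - C) / C - (rS - 1) = βC * ((mu - m) / m - (rS - 1)))
    (h4 : (Cd - C) / C - (rS - 1) = βC * ((md - m) / m - (rS - 1))) :
    C = (((rS - d) / (u - d)) * Cu + ((u - rS) / (u - d)) * Cd) / rS :=
  stmt_4_general S m u d rS C Cu Cd mu md βS βC hS hC hud hrd hd h1 h2 h3 h4
end

section
/- Let k > 0, σ > 0, T > t, and let r be a real number. Define d1(x) = (log(x/k) + (r + σ²/2)·(T - t))/(σ·√(T - t)) and d2(x) = d1(x) - σ·√(T - t), and let Φ be the standard normal cumulative distribution function. Then the Black–Scholes call price function x ↦ w(x) = x·Φ(d1(x)) - k·exp(-r·(T - t))·Φ(d2(x)) is differentiable at every x > 0 with derivative ∂w/∂x = Φ(d1(x)). -/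
/-!
Write `τ = T - t` and `m = σ √τ`, so that `d2 = d1 - m`. Differentiating gives
`∂w/∂x = Φ(d1) + (x φ(d1) - k e^{-rτ} φ(d2)) d1'`, and the bracket vanishes: completing the square,
`φ(d1 - m) = e^{d1 m - m²/2} φ(d1)`, and `d1 m - m²/2 = log (x/k) + rτ`.
-/

open Real MeasureTheory

/-- Standard normal cumulative distribution function. -/
noncomputable def stdNormalCDF (y : ℝ) : ℝ :=
  ∫ u in Set.Iic y, (1 / Real.sqrt (2 * π)) * Real.exp (-u ^ 2 / 2)

theorem hasDerivAt_integral_Iic {E : Type*} [NormedAddCommGroup E] [NormedSpace ℝ E]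
    [CompleteSpace E] {f : ℝ → E} (hf : Integrable f) {y : ℝ} (hy : ContinuousAt f y) :
    HasDerivAt (fun z => ∫ u in Set.Iic z, f u) (f y) y := by
  have h_split : (fun z => ∫ u in Set.Iic z, f u) =
      fun z => (∫ u in Set.Iic 0, f u) + ∫ u in (0 : ℝ)..z, f u := by
    funext z
    rw [← intervalIntegral.integral_Iic_sub_Iic hf.integrableOn hf.integrableOn,
      add_sub_cancel]
  rw [h_split]
  exact (intervalIntegral.integral_hasDerivAt_right hf.intervalIntegrable
    hf.aestronglyMeasurable.stronglyMeasurableAtFilter hy).const_add _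

namespace StdNormal

noncomputable def pdf (u : ℝ) : ℝ :=
  (1 / Real.sqrt (2 * π)) * Real.exp (-u ^ 2 / 2)

theorem integrable_pdf : Integrable pdf := by
  have h : pdf = fun u => (1 / Real.sqrt (2 * π)) * Real.exp (-(1 / 2) * u ^ 2) := by
    funext u; unfold pdf; ring_nf
  rw [h]
  exact (integrable_exp_neg_mul_sq (by norm_num)).const_mul _

theorem continuous_pdf : Continuous pdf := by
  unfold pdf
  fun_prop

theorem pdf_sub (a m : ℝ) : pdf (a - m) = Real.exp (a * m - m ^ 2 / 2) * pdf a := by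
  unfold pdf
  rw [mul_left_comm, ← Real.exp_add]
  ring_nf

end StdNormal

open StdNormal

theorem hasDerivAt_stdNormalCDF (y : ℝ) : HasDerivAt stdNormalCDF (pdf y) y :=
  hasDerivAt_integral_Iic integrable_pdf continuous_pdf.continuousAt

theorem mul_pdf_eq_of_mul_eq {x k a m ρ : ℝ} (hx : 0 < x) (hk : 0 < k)
    (ha : a * m = Real.log (x / k) + ρ + m ^ 2 / 2) :
    x * pdf a = k * Real.exp (-ρ) * pdf (a - m) := by
  have hexp : Real.exp (a * m - m ^ 2 / 2) = x / k * Real.exp ρ := by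
    rw [ha, add_sub_cancel_right, Real.exp_add, Real.exp_log (div_pos hx hk)]
  rw [pdf_sub, hexp]
  field_simp
  rw [mul_assoc, ← Real.exp_add, neg_add_cancel, Real.exp_zero, mul_one]

theorem hasDerivAt_mul_stdNormalCDF_sub {d : ℝ → ℝ} {d' x K m : ℝ} (hd : HasDerivAt d d' x)
    (hK : x * pdf (d x) = K * pdf (d x - m)) :
    HasDerivAt (fun y => y * stdNormalCDF (d y) - K * stdNormalCDF (d y - m))
      (stdNormalCDF (d x)) x := by
  have h1 := (hasDerivAt_stdNormalCDF (d x)).comp x hd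
  have h2 := (hasDerivAt_stdNormalCDF (d x - m)).comp x (hd.sub_const m)
  refine (((hasDerivAt_id' x).mul h1).sub (h2.const_mul K)).congr_deriv ?_
  simp only [Function.comp_apply]
  linear_combination d' * hK

theorem hasDerivAt_log_div_add_div {k c m x : ℝ} (hk : k ≠ 0) (hx : x ≠ 0) :
    HasDerivAt (fun y => (Real.log (y / k) + c) / m) (1 / (x * m)) x := by
  refine ((((hasDerivAt_id' x).div_const k).log (div_ne_zero hx hk)).add_const c).div_const m
    |>.congr_deriv ?_
  field_simp

theorem stmt_6 (k σ t T r : ℝ) (hk : 0 < k) (hσ : 0 < σ) (hT : t < T)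
    (d1 : ℝ → ℝ)
    (hd1 : ∀ x, d1 x = (Real.log (x / k) + (r + σ ^ 2 / 2) * (T - t)) / (σ * Real.sqrt (T - t)))
    (d2 : ℝ → ℝ) (hd2 : ∀ x, d2 x = d1 x - σ * Real.sqrt (T - t)) :
    ∀ x : ℝ, 0 < x →
      HasDerivAt (fun y : ℝ => y * stdNormalCDF (d1 y) - k * Real.exp (-r * (T - t)) * stdNormalCDF (d2 y))
        (stdNormalCDF (d1 x)) x := by
  intro x hx
  set m := σ * Real.sqrt (T - t)
  have hm : m ≠ 0 := (mul_pos hσ (Real.sqrt_pos.mpr (sub_pos.mpr hT))).ne'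
  have hm_sq : m ^ 2 = σ ^ 2 * (T - t) := by
    rw [mul_pow, Real.sq_sqrt (sub_pos.mpr hT).le]
  have hd1_mul : d1 x * m = Real.log (x / k) + r * (T - t) + m ^ 2 / 2 := by
    rw [hd1, div_mul_cancel₀ _ hm, hm_sq]
    ring
  have hd1_eq : d1 = fun y => (Real.log (y / k) + (r + σ ^ 2 / 2) * (T - t)) / m := funext hd1
  have hd1_deriv : HasDerivAt d1 (1 / (x * m)) x := by
    rw [hd1_eq]
    exact hasDerivAt_log_div_add_div hk.ne' hx.ne'
  simpa only [hd2, neg_mul] using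
    hasDerivAt_mul_stdNormalCDF_sub hd1_deriv (mul_pdf_eq_of_mul_eq hx hk hd1_mul)
end

section
/- Let x > 0, k > 0, σ > 0, τ > 0, and let μ be a real number. Let γ denote the standard Gaussian measure on ℝ (mean 0, variance 1). Then ∫_ℝ max(x·exp((μ - σ²/2)·τ + σ·√τ·z) - k, 0) dγ(z) = exp(μ·τ)·Φ(d1*)·x - Φ(d2*)·k, where d1* = (log(x/k) + (μ + σ²/2)·τ)/(σ·√τ), d2* = d1* - σ·√τ, and Φ is the standard normal cumulative distribution function. -/
/-!
The payoff `max (x e^{a + b z} - k) 0` vanishes exactly below `z = -d`, with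
`d = (log (x / k) + a) / b`, so the expectation is `x e^a E[e^{bZ}; Z ≥ -d] - k P(Z ≥ -d)`.
Exponential tilting, `φ(z) e^{bz} = e^{b²/2} φ(z - b)`, turns the first term into
`e^{b²/2}` times a tail probability of `N(b, 1)`, and reflection turns Gaussian tails into
values of `Φ`: `P(N(m, 1) ≥ c) = Φ(m - c)`.
-/

open Real MeasureTheory ProbabilityTheory

open scoped NNReal

namespace ProbabilityTheory

variable {μ : ℝ} {v : ℝ≥0}

lemma measureReal_gaussianReal_eq_integral (hv : v ≠ 0) (s : Set ℝ) :
    (gaussianReal μ v).real s = ∫ x in s, gaussianPDFReal μ v x := by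
  rw [measureReal_def, gaussianReal_apply_eq_integral _ hv,
    ENNReal.toReal_ofReal (setIntegral_nonneg_of_ae (ae_of_all _ (gaussianPDFReal_nonneg _ _)))]

lemma setIntegral_gaussianReal_eq_setIntegral_mul (hv : v ≠ 0) (f : ℝ → ℝ) (s : Set ℝ) :
    ∫ x in s, f x ∂gaussianReal μ v = ∫ x in s, gaussianPDFReal μ v x * f x := by
  rw [gaussianReal_of_var_ne_zero _ hv, setIntegral_withDensity_eq_setIntegral_toReal_smul' s
    (measurable_gaussianPDF _ _) (ae_of_all _ fun _ ↦ gaussianPDF_lt_top)]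
  simp only [toReal_gaussianPDF, smul_eq_mul]

lemma gaussianPDFReal_mul_exp (hv : v ≠ 0) (t x : ℝ) :
    gaussianPDFReal μ v x * exp (t * x) =
      exp (μ * t + v * t ^ 2 / 2) * gaussianPDFReal (μ + v * t) v x := by
  have hv' : (v : ℝ) ≠ 0 := mod_cast hv
  simp only [gaussianPDFReal]
  rw [mul_left_comm, mul_assoc, ← exp_add, ← exp_add]
  congr 2
  field_simp
  ring

lemma setIntegral_exp_mul_gaussianReal (hv : v ≠ 0) (t : ℝ) (s : Set ℝ) :
    ∫ x in s, exp (t * x) ∂gaussianReal μ v =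
      exp (μ * t + v * t ^ 2 / 2) * (gaussianReal (μ + v * t) v).real s := by
  simp only [setIntegral_gaussianReal_eq_setIntegral_mul hv, gaussianPDFReal_mul_exp hv,
    integral_const_mul, measureReal_gaussianReal_eq_integral hv]

lemma measureReal_gaussianReal_Ici_eq_Iic (c : ℝ) :
    (gaussianReal μ v).real (Set.Ici c) = (gaussianReal 0 v).real (Set.Iic (μ - c)) := by
  have h : gaussianReal 0 v = (gaussianReal μ v).map (μ - ·) := by
    rw [gaussianReal_map_const_sub, sub_self]
  rw [h, map_measureReal_apply (by fun_prop) measurableSet_Iic]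
  congr 1
  ext x
  simp

end ProbabilityTheory

lemma stdNormalCDF_eq_measureReal_Iic (y : ℝ) :
    stdNormalCDF y = (gaussianReal 0 1).real (Set.Iic y) := by
  rw [measureReal_gaussianReal_eq_integral one_ne_zero, stdNormalCDF]
  congr with u
  simp [gaussianPDFReal]

lemma stdNormalCDF_sub_eq_measureReal_Ici (m c : ℝ) :
    stdNormalCDF (m - c) = (gaussianReal m 1).real (Set.Ici c) := by
  rw [measureReal_gaussianReal_Ici_eq_Iic, stdNormalCDF_eq_measureReal_Iic]

lemma le_mul_exp_add_mul_iff {x k b : ℝ} (hx : 0 < x) (hk : 0 < k) (hb : 0 < b) (a z : ℝ) :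
    k ≤ x * exp (a + b * z) ↔ -((log (x / k) + a) / b) ≤ z := by
  rw [← div_le_iff₀' hx, ← log_le_iff_le_exp (div_pos hk hx), neg_div', div_le_iff₀ hb,
    ← inv_div, log_inv]
  constructor <;> intro h <;> linarith

lemma max_mul_exp_sub_eq_indicator {x k b : ℝ} (hx : 0 < x) (hk : 0 < k) (hb : 0 < b)
    (a z : ℝ) :
    max (x * exp (a + b * z) - k) 0 =
      (Set.Ici (-((log (x / k) + a) / b))).indicator (fun z ↦ x * exp (a + b * z) - k) z := by
  simp only [Set.indicator_apply, Set.mem_Ici, ← le_mul_exp_add_mul_iff hx hk hb]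
  split_ifs with h
  · exact max_eq_left (sub_nonneg.2 h)
  · exact max_eq_right (by linarith)

theorem integral_max_mul_exp_sub_gaussianReal {x k b : ℝ} (hx : 0 < x) (hk : 0 < k)
    (hb : 0 < b) (a : ℝ) :
    ∫ z, max (x * exp (a + b * z) - k) 0 ∂gaussianReal 0 1 =
      x * exp (a + b ^ 2 / 2) * stdNormalCDF ((log (x / k) + a) / b + b) -
        k * stdNormalCDF ((log (x / k) + a) / b) := by
  rw [integral_congr_ae (ae_of_all _ (max_mul_exp_sub_eq_indicator hx hk hb a))]
  simp only [exp_add a, mul_assoc x]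
  set d := (log (x / k) + a) / b
  rw [integral_indicator measurableSet_Ici, integral_sub, integral_const_mul, integral_const_mul,
    setIntegral_exp_mul_gaussianReal one_ne_zero, setIntegral_const]
  · simp only [NNReal.coe_one, zero_mul, zero_add, one_mul]
    rw [← stdNormalCDF_sub_eq_measureReal_Ici, ← stdNormalCDF_sub_eq_measureReal_Ici,
      sub_neg_eq_add, zero_sub, neg_neg, add_comm b, smul_eq_mul]
    ring
  · exact ((integrable_exp_mul_gaussianReal b).const_mul _ |>.const_mul _).integrableOn
  · exact integrable_const k

theorem stmt_11 (x k σ τ μ : ℝ) (hx : 0 < x) (hk : 0 < k) (hσ : 0 < σ) (hτ : 0 < τ)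
    (d1 d2 : ℝ)
    (hd1 : d1 = (Real.log (x / k) + (μ + σ ^ 2 / 2) * τ) / (σ * Real.sqrt τ))
    (hd2 : d2 = d1 - σ * Real.sqrt τ) :
    ∫ z, max (x * Real.exp ((μ - σ ^ 2 / 2) * τ + σ * Real.sqrt τ * z) - k) 0
        ∂(gaussianReal 0 1) =
      Real.exp (μ * τ) * stdNormalCDF d1 * x - stdNormalCDF d2 * k := by
  have hb : 0 < σ * √τ := mul_pos hσ (sqrt_pos.2 hτ)
  have hb2 : (σ * √τ) ^ 2 = σ ^ 2 * τ := by rw [mul_pow, sq_sqrt hτ.le]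
  have hd2' : (log (x / k) + (μ - σ ^ 2 / 2) * τ) / (σ * √τ) = d2 := by
    rw [hd2, hd1, eq_sub_iff_add_eq, div_add' _ _ _ hb.ne']
    congr 1
    linear_combination hb2
  have hd1' : d2 + σ * √τ = d1 := by rw [hd2, sub_add_cancel]
  rw [integral_max_mul_exp_sub_gaussianReal hx hk hb, hd2', hd1', hb2,
    show (μ - σ ^ 2 / 2) * τ + σ ^ 2 * τ / 2 = μ * τ by ring]
  ring
end
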